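/- Let T, d, τ be positive natural numbers with T ≥ (d − 1)·τ + 1 and set m = T − (d − 1)·τ. Let x : Fin T → ℝ be a time series and let y : Fin T → ℝ be its time reversal, y(t) = x(T − 1 − t). Let X and Y be the Takens embedding point clouds of x and y in EuclideanSpace ℝ (Fin d), with points X_j(k) = x(j + k·τ) and Y_j(k) = y(j + k·τ) for j ∈ Fin m, k ∈ Fin d. Then there exists a linear isometric equivalence f : EuclideanSpace ℝ (Fin d) ≃ₗᵢ EuclideanSpace ℝ (Fin d) such that f '' X = Y. In particular the two point clouds X and Y are isometric subsets of EuclideanSpace ℝ (Fin d). -/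

import Mathlib

/-- Toy Example 1 (isometry level): the Takens point clouds of a time series and of its
time reversal are related by a linear isometric equivalence of the ambient Euclidean space;
in particular they are isometric subsets. -/
theorem takens_pointCloud_reverse_isometric
    (T d τ : ℕ) (hT : 0 < T) (hd : 0 < d) (hτ : 0 < τ)
    (hTd : (d - 1) * τ + 1 ≤ T) (m : ℕ) (hm : m = T - (d - 1) * τ)
    (x y : EuclideanSpace ℝ (Fin T))
    (hy : ∀ t : Fin T, y t = x ⟨T - 1 - t.1, by omega⟩) :
    ∃ f : EuclideanSpace ℝ (Fin d) ≃ₗᵢ[ℝ] EuclideanSpace ℝ (Fin d),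
      (⇑f '' (Set.range fun j : Fin m =>
        (WithLp.toLp 2 fun k : Fin d => x ⟨j.1 + k.1 * τ, by
          have hk : k.1 * τ ≤ (d - 1) * τ := Nat.mul_le_mul (by omega) (le_refl τ)
          omega⟩ : EuclideanSpace ℝ (Fin d))))
      = (Set.range fun j : Fin m =>
        (WithLp.toLp 2 fun k : Fin d => y ⟨j.1 + k.1 * τ, by
          have hk : k.1 * τ ≤ (d - 1) * τ := Nat.mul_le_mul (by omega) (le_refl τ)
          omega⟩ : EuclideanSpace ℝ (Fin d))) := by
  refine ⟨LinearIsometryEquiv.piLpCongrLeft 2 ℝ ℝ (Fin.revPerm : Fin d ≃ Fin d), ?_⟩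
  rw [← Set.range_comp]
  have hmpos : 0 < m := by omega
  apply Set.Subset.antisymm
  · rintro _ ⟨j, rfl⟩
    refine ⟨⟨m - 1 - j.1, by omega⟩, ?_⟩
    ext k
    simp only [Function.comp_apply, LinearIsometryEquiv.piLpCongrLeft_apply,
      LinearEquiv.piCongrLeft'_apply, Equiv.piCongrLeft'_apply, Equiv.symm_symm]
    rw [hy]
    refine congrArg x.ofLp ?_
    have hk : k.1 * τ ≤ (d - 1) * τ := Nat.mul_le_mul (by omega) (le_refl τ)
    have h1 : (Fin.revPerm.symm k : Fin d).1 = d - 1 - k.1 := by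
      simp [Fin.rev]; omega
    have h2 : (d - 1 - k.1) * τ = (d - 1) * τ - k.1 * τ := Nat.sub_mul _ _ _
    ext
    simp only [h1, h2]
    omega
  · rintro _ ⟨j, rfl⟩
    refine ⟨⟨m - 1 - j.1, by omega⟩, ?_⟩
    ext k
    simp only [Function.comp_apply, LinearIsometryEquiv.piLpCongrLeft_apply,
      LinearEquiv.piCongrLeft'_apply, Equiv.piCongrLeft'_apply, Equiv.symm_symm]
    rw [hy]
    have hk : k.1 * τ ≤ (d - 1) * τ := Nat.mul_le_mul (by omega) (le_refl τ)
    have h1 : (Fin.revPerm.symm k : Fin d).1 = d - 1 - k.1 := by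
      simp [Fin.rev]; omega
    have h2 : (d - 1 - k.1) * τ = (d - 1) * τ - k.1 * τ := Nat.sub_mul _ _ _
    refine congrArg x.ofLp ?_
    ext
    simp only [h1, h2]
    omega
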